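/- arXiv:math/0507292 — 4 statements merged into one kernel-verified Lean document; each statement's English description precedes it below -/
import Mathlib

section
/- Let A be an admissible subcategory of a triangulated category T. Then the right mutation R_A vanishes on A and its restriction to A^⊥ is an equivalence A^⊥ → ^⊥A; similarly, the left mutation L_A vanishes on A and its restriction to ^⊥A is an equivalence ^⊥A → A^⊥. -/
namespace HPD

open CategoryTheory Limits Pretriangulated

universe v u

variable {C : Type u} [Category.{v} C]

section Preadd
variable [Preadditive C]

/-- The right orthogonal to a set of objects. -/
def rightOrth (A : Set C) : Set C := {T : C | ∀ a ∈ A, ∀ f : a ⟶ T, f = 0}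

/-- The left orthogonal to a set of objects. -/
def leftOrth (A : Set C) : Set C := {T : C | ∀ a ∈ A, ∀ f : T ⟶ a, f = 0}

end Preadd

/-- The inclusion functor of the full subcategory on a set of objects. -/
abbrev incl (A : Set C) : ObjectProperty.FullSubcategory (fun X : C => X ∈ A) ⥤ C :=
  ObjectProperty.ι _

/-- A full subcategory is right admissible if its inclusion functor admits a right adjoint. -/
def RightAdmissible (A : Set C) : Prop := (incl A).IsLeftAdjoint

/-- A full subcategory is left admissible if its inclusion functor admits a left adjoint. -/
def LeftAdmissible (A : Set C) : Prop := (incl A).IsRightAdjoint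

/-- A full subcategory is admissible if it is both left and right admissible. -/
def Admissible (A : Set C) : Prop := RightAdmissible A ∧ LeftAdmissible A

section Triang

variable [HasZeroObject C] [Preadditive C] [HasShift C ℤ]
  [∀ n : ℤ, (shiftFunctor C n).Additive] [Pretriangulated C]

/-- A set of objects is a (strictly full) triangulated subcategory. -/
structure IsTriangulatedSub (A : Set C) : Prop where
  zero : ∀ X : C, IsZero X → X ∈ A
  isoClosed : ∀ ⦃X Y : C⦄, (X ≅ Y) → X ∈ A → Y ∈ A
  shift : ∀ (X : C) (n : ℤ), X ∈ A → X⟦n⟧ ∈ A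
  ext₂ : ∀ T : Triangle C, T ∈ (distTriang C) → T.obj₁ ∈ A → T.obj₃ ∈ A → T.obj₂ ∈ A

/-- The minimal strictly full triangulated subcategory containing a set of objects. -/
def triangulatedClosure (S : Set C) : Set C :=
  {X : C | ∀ A : Set C, IsTriangulatedSub A → S ⊆ A → X ∈ A}

/-- A family is semiorthogonal if there are no nonzero morphisms from objects of a later
subcategory to objects of an earlier one. -/
def IsSemiorthogonal {n : ℕ} (A : Fin n → Set C) : Prop :=
  ∀ ⦃i j : Fin n⦄, j < i → ∀ a ∈ A i, ∀ b ∈ A j, ∀ f : a ⟶ b, f = 0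

/-- `IsSODOn S A` : the family `A` is a semiorthogonal decomposition of the (strictly full
triangulated) subcategory with objects `S`; every object of `S` admits a filtration
`0 = T_n → ... → T_1 → T_0 = T` whose `k`-th cone lies in `A k`. -/
structure IsSODOn {n : ℕ} (S : Set C) (A : Fin n → Set C) : Prop where
  subset : ∀ i, A i ⊆ S
  semiorthogonal : IsSemiorthogonal A
  filtration : ∀ T ∈ S, ∃ (F : Fin (n+1) → C) (f : ∀ k : Fin n, F k.succ ⟶ F k.castSucc),
    F 0 = T ∧ IsZero (F (Fin.last n)) ∧
    ∀ k : Fin n, ∃ (Q : C) (g : F k.castSucc ⟶ Q) (h : Q ⟶ (F k.succ)⟦(1 : ℤ)⟧),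
      Q ∈ A k ∧ Triangle.mk (f k) g h ∈ distTriang C

end Triang

end HPD

/-!
Right admissibility of `A` puts every `T` in a triangle `i i^! T → T → B → i i^! T⟦1⟧` with
`B ∈ A^⊥`. If `T ∈ ^⊥(A^⊥)` the map `T → B` vanishes, so the counit `i i^! T → T` splits and
`T ∈ A`; thus `^⊥(A^⊥) = A`, and dually `(^⊥A)^⊥ = A`. Consequently the fibre of the unit
`X → L X` lies in `A`, so for `V ∈ ^⊥A` the long exact sequence gives
`Hom(V, X) ≅ Hom(V, L X) ≅ Hom(V, R L X)`; dually for the cone of the counit `R Y → Y` and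
`V ∈ A^⊥`. By Yoneda the unit and counit of the composite adjunction
`L ∘ i_{^⊥A} ⊣ R ∘ i_{A^⊥}` are isomorphisms. Finally `R a = 0` for `a ∈ A`, since
`Hom(R a, R a) ≅ Hom(R a, a) = 0`.
-/

open CategoryTheory Limits Pretriangulated

namespace CategoryTheory.Adjunction

variable {𝒜 C ℬ : Type*} [Category 𝒜] [Category C] [Category ℬ]

section Counit

variable {F : 𝒜 ⥤ C} {G : C ⥤ 𝒜}

lemma bijective_comp_counit_app (adj : F ⊣ G) (hF : F.FullyFaithful) (X : 𝒜) (Y : C) :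
    Function.Bijective (fun f : F.obj X ⟶ F.obj (G.obj Y) => f ≫ adj.counit.app Y) := by
  have hcomp : (fun f : F.obj X ⟶ F.obj (G.obj Y) => f ≫ adj.counit.app Y) =
      (adj.homEquiv X Y).symm ∘ hF.preimage := by
    funext f
    simp [homEquiv_counit]
  exact hcomp ▸ (adj.homEquiv X Y).symm.bijective.comp hF.homEquiv.symm.bijective

lemma isZero_obj_of_counit_app_eq_zero [HasZeroMorphisms C] (adj : F ⊣ G)
    (hF : F.FullyFaithful) {Y : C} (h : adj.counit.app Y = 0) : IsZero (F.obj (G.obj Y)) := by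
  rw [IsZero.iff_id_eq_zero]
  exact (adj.bijective_comp_counit_app hF _ Y).1 (by simp [h])

end Counit

section Unit

variable {F : C ⥤ 𝒜} {G : 𝒜 ⥤ C}

lemma bijective_unit_app_comp (adj : F ⊣ G) (hG : G.FullyFaithful) (X : C) (Y : 𝒜) :
    Function.Bijective (fun f : G.obj (F.obj X) ⟶ G.obj Y => adj.unit.app X ≫ f) := by
  have hcomp : (fun f : G.obj (F.obj X) ⟶ G.obj Y => adj.unit.app X ≫ f) =
      adj.homEquiv X Y ∘ hG.preimage := by
    funext f
    simp [homEquiv_unit]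
  exact hcomp ▸ (adj.homEquiv X Y).bijective.comp hG.homEquiv.symm.bijective

lemma isZero_obj_of_unit_app_eq_zero [HasZeroMorphisms C] (adj : F ⊣ G)
    (hG : G.FullyFaithful) {X : C} (h : adj.unit.app X = 0) : IsZero (G.obj (F.obj X)) := by
  rw [IsZero.iff_id_eq_zero]
  exact (adj.bijective_unit_app_comp hG X _).1 (by simp [h])

end Unit

variable {F₁ : 𝒜 ⥤ C} {G₁ : C ⥤ 𝒜} {F₂ : C ⥤ ℬ} {G₂ : ℬ ⥤ C}

lemma isIso_comp_unit_app (adj₁ : F₁ ⊣ G₁) (adj₂ : F₂ ⊣ G₂) (hF₁ : F₁.FullyFaithful) (X : 𝒜)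
    (h : ∀ V : 𝒜, Function.Bijective
      (fun f : F₁.obj V ⟶ F₁.obj X => f ≫ adj₂.unit.app (F₁.obj X))) :
    IsIso ((adj₁.comp adj₂).unit.app X) := by
  refine isIso_of_yoneda_map_bijective _ fun V => ?_
  have hcomp : (fun f : V ⟶ X => f ≫ (adj₁.comp adj₂).unit.app X) =
      adj₁.homEquiv V _ ∘ (fun f => f ≫ adj₂.unit.app (F₁.obj X)) ∘ F₁.map := by
    funext f
    simp [homEquiv_unit]
  exact hcomp ▸ (adj₁.homEquiv V _).bijective.comp ((h V).comp (hF₁.map_bijective V X))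

lemma isIso_comp_counit_app (adj₁ : F₁ ⊣ G₁) (adj₂ : F₂ ⊣ G₂) (hG₂ : G₂.FullyFaithful) (Y : ℬ)
    (h : ∀ V : ℬ, Function.Bijective
      (fun f : G₂.obj Y ⟶ G₂.obj V => adj₁.counit.app (G₂.obj Y) ≫ f)) :
    IsIso ((adj₁.comp adj₂).counit.app Y) := by
  refine isIso_of_coyoneda_map_bijective _ fun V => ?_
  have hcomp : (fun f : Y ⟶ V => (adj₁.comp adj₂).counit.app Y ≫ f) =
      (adj₂.homEquiv _ V).symm ∘ (fun f => adj₁.counit.app (G₂.obj Y) ≫ f) ∘ G₂.map := by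
    funext f
    simp [homEquiv_counit]
  exact hcomp ▸ (adj₂.homEquiv _ V).symm.bijective.comp ((h V).comp (hG₂.map_bijective Y V))

end CategoryTheory.Adjunction

namespace CategoryTheory.Pretriangulated

variable {C : Type*} [Category C] [HasZeroObject C] [Preadditive C] [HasShift C ℤ]
  [∀ n : ℤ, (shiftFunctor C n).Additive] [Pretriangulated C]
  {T : Triangle C}

lemma bijective_comp_distTriang_mor₂ (hT : T ∈ distTriang C) {V : C}
    (h₁ : ∀ f : V ⟶ T.obj₁, f = 0) (h₁' : ∀ f : V ⟶ T.obj₁⟦(1 : ℤ)⟧, f = 0) :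
    Function.Bijective (fun f : V ⟶ T.obj₂ => f ≫ T.mor₂) := by
  refine ⟨(injective_iff_map_eq_zero (Preadditive.rightComp V T.mor₂)).2 fun f hf => ?_,
    fun g => ?_⟩
  · obtain ⟨g, rfl⟩ := Triangle.coyoneda_exact₂ T hT f hf
    simp [h₁ g]
  · obtain ⟨f, rfl⟩ := Triangle.coyoneda_exact₃ T hT g (h₁' _)
    exact ⟨f, rfl⟩

lemma bijective_distTriang_mor₁_comp (hT : T ∈ distTriang C) {V : C}
    (h₃ : ∀ f : T.obj₃ ⟶ V, f = 0) (h₃' : ∀ f : T.obj₃⟦(-1 : ℤ)⟧ ⟶ V, f = 0) :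
    Function.Bijective (fun f : T.obj₂ ⟶ V => T.mor₁ ≫ f) := by
  refine ⟨(injective_iff_map_eq_zero (Preadditive.leftComp V T.mor₁)).2 fun f hf => ?_,
    fun g => ?_⟩
  · obtain ⟨g, rfl⟩ := Triangle.yoneda_exact₂ T hT f hf
    simp [h₃ g]
  · obtain ⟨f, rfl⟩ := Triangle.yoneda_exact₂ _ (inv_rot_of_distTriang T hT) g (h₃' _)
    exact ⟨f, rfl⟩

lemma eq_zero_of_surjective_distTriang_mor₂_comp (hT : T ∈ distTriang C) {W : C}
    (hW : Function.Surjective (fun g : T.obj₃ ⟶ W => T.mor₂ ≫ g))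
    (hW' : Function.Injective (fun g : T.obj₃ ⟶ W⟦(1 : ℤ)⟧ => T.mor₂ ≫ g))
    (f : T.obj₁ ⟶ W) : f = 0 := by
  have hf : T.mor₃ ≫ f⟦(1 : ℤ)⟧' = 0 :=
    hW' (by simp [reassoc_of% comp_distTriang_mor_zero₂₃ T hT])
  obtain ⟨g, hg⟩ :
      ∃ g : T.obj₂⟦(1 : ℤ)⟧ ⟶ W⟦(1 : ℤ)⟧, f⟦(1 : ℤ)⟧' = (-T.mor₁⟦(1 : ℤ)⟧') ≫ g :=
    Triangle.yoneda_exact₃ _ (rot_of_distTriang T hT) _ hf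
  obtain ⟨g, rfl⟩ := (shiftFunctor C (1 : ℤ)).map_surjective g
  obtain ⟨k, rfl⟩ := hW g
  have hf' : f = -(T.mor₁ ≫ T.mor₂ ≫ k) :=
    (shiftFunctor C (1 : ℤ)).map_injective (by simp [hg])
  simp [hf', reassoc_of% comp_distTriang_mor_zero₁₂ T hT]

lemma eq_zero_of_surjective_comp_distTriang_mor₁ (hT : T ∈ distTriang C) {W : C}
    (hW : Function.Surjective (fun g : W ⟶ T.obj₁ => g ≫ T.mor₁))
    (hW' : Function.Injective (fun g : W⟦(-1 : ℤ)⟧ ⟶ T.obj₁ => g ≫ T.mor₁))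
    (f : W ⟶ T.obj₃) : f = 0 := by
  have hf : f ≫ T.mor₃ = 0 := by
    let ε := (shiftFunctorCompIsoId C (-1 : ℤ) 1 (neg_add_cancel 1)).app W
    obtain ⟨g, hg⟩ := (shiftFunctor C (1 : ℤ)).map_surjective (ε.hom ≫ f ≫ T.mor₃)
    have hg₀ : g = 0 := hW' (show g ≫ T.mor₁ = 0 ≫ T.mor₁ from
      (shiftFunctor C (1 : ℤ)).map_injective (by simp [hg, comp_distTriang_mor_zero₃₁ T hT]))
    rw [← cancel_epi ε.hom, ← hg, hg₀, Functor.map_zero, comp_zero]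
  obtain ⟨g, rfl⟩ := Triangle.coyoneda_exact₃ T hT f hf
  obtain ⟨k, rfl⟩ := hW g
  simp [comp_distTriang_mor_zero₁₂ T hT]

end CategoryTheory.Pretriangulated

namespace HPD

section

variable {C : Type*} [Category C] [Preadditive C] [HasShift C ℤ]
  [∀ n : ℤ, (shiftFunctor C n).Additive] {A : Set C}

lemma rightOrth_shift_mem (hA : ∀ (X : C) (n : ℤ), X ∈ A → X⟦n⟧ ∈ A) {X : C}
    (hX : X ∈ rightOrth A) (n : ℤ) : X⟦n⟧ ∈ rightOrth A := by
  intro a ha f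
  let ε := (shiftFunctorCompIsoId C (-n) n (neg_add_cancel n)).app a
  obtain ⟨g, hg⟩ := (shiftFunctor C n).map_surjective (ε.hom ≫ f)
  rw [← cancel_epi ε.hom, ← hg, hX _ (hA a (-n) ha) g, Functor.map_zero, comp_zero]

lemma leftOrth_shift_mem (hA : ∀ (X : C) (n : ℤ), X ∈ A → X⟦n⟧ ∈ A) {X : C}
    (hX : X ∈ leftOrth A) (n : ℤ) : X⟦n⟧ ∈ leftOrth A := by
  intro a ha f
  let ε := (shiftFunctorCompIsoId C (-n) n (neg_add_cancel n)).app a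
  obtain ⟨g, hg⟩ := (shiftFunctor C n).map_surjective (f ≫ ε.inv)
  rw [← cancel_mono ε.inv, ← hg, hX _ (hA a (-n) ha) g, Functor.map_zero, zero_comp]

variable [HasZeroObject C] [Pretriangulated C]

lemma mem_leftOrth_of_distTriang_unit {D : Set C} (hD : ∀ W ∈ D, W⟦(1 : ℤ)⟧ ∈ D)
    {Λ : C ⥤ ObjectProperty.FullSubcategory (fun X : C => X ∈ D)} (adj : Λ ⊣ incl D)
    {T a : C} {v : a ⟶ T} {w : (incl D).obj (Λ.obj T) ⟶ a⟦(1 : ℤ)⟧}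
    (hΔ : Triangle.mk v (adj.unit.app T) w ∈ distTriang C) : a ∈ leftOrth D :=
  fun W hW => eq_zero_of_surjective_distTriang_mor₂_comp hΔ
    (adj.bijective_unit_app_comp (ObjectProperty.fullyFaithfulι _) T ⟨W, hW⟩).2
    (adj.bijective_unit_app_comp (ObjectProperty.fullyFaithfulι _) T ⟨_, hD W hW⟩).1

lemma mem_rightOrth_of_distTriang_counit {D : Set C} (hD : ∀ W ∈ D, W⟦(-1 : ℤ)⟧ ∈ D)
    {ρ : C ⥤ ObjectProperty.FullSubcategory (fun X : C => X ∈ D)} (adj : incl D ⊣ ρ)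
    {T b : C} {g : T ⟶ b} {h : b ⟶ ((incl D).obj (ρ.obj T))⟦(1 : ℤ)⟧}
    (hΔ : Triangle.mk (adj.counit.app T) g h ∈ distTriang C) : b ∈ rightOrth D :=
  fun W hW => eq_zero_of_surjective_comp_distTriang_mor₁ hΔ
    (adj.bijective_comp_counit_app (ObjectProperty.fullyFaithfulι _) ⟨W, hW⟩ T).2
    (adj.bijective_comp_counit_app (ObjectProperty.fullyFaithfulι _) ⟨_, hD W hW⟩ T).1

lemma leftOrth_rightOrth_subset (hA : IsTriangulatedSub A) (hadm : RightAdmissible A) :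
    leftOrth (rightOrth A) ⊆ A := by
  intro P hP
  have : (incl A).IsLeftAdjoint := hadm
  let _ : Coreflective (incl A) := ⟨_, Adjunction.ofIsLeftAdjoint (incl A)⟩
  obtain ⟨b, g, h, hΔ⟩ :=
    distinguished_cocone_triangle ((coreflectorAdjunction (incl A)).counit.app P)
  have hg : g = 0 :=
    hP b (mem_rightOrth_of_distTriang_counit (fun W hW => hA.shift W (-1) hW) _ hΔ) g
  obtain ⟨s, hs⟩ := Triangle.coyoneda_exact₂ _ hΔ (𝟙 P) (by rw [hg]; exact comp_zero)
  have : IsSplitEpi ((coreflectorAdjunction (incl A)).counit.app P) := ⟨⟨s, hs.symm⟩⟩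
  obtain ⟨X, ⟨e⟩⟩ := mem_essImage_of_counit_isSplitEpi (j := incl A) (A := P)
  exact hA.isoClosed e X.property

lemma rightOrth_leftOrth_subset (hA : IsTriangulatedSub A) (hadm : LeftAdmissible A) :
    rightOrth (leftOrth A) ⊆ A := by
  intro P hP
  have : (incl A).IsRightAdjoint := hadm
  let _ : Reflective (incl A) := ⟨_, Adjunction.ofIsRightAdjoint (incl A)⟩
  obtain ⟨a, v, w, hΔ⟩ :=
    distinguished_cocone_triangle₁ ((reflectorAdjunction (incl A)).unit.app P)
  have hv : v = 0 :=
    hP a (mem_leftOrth_of_distTriang_unit (fun W hW => hA.shift W 1 hW) _ hΔ) v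
  obtain ⟨s, hs⟩ := Triangle.yoneda_exact₂ _ hΔ (𝟙 P) (by rw [hv]; exact zero_comp)
  have : IsSplitMono ((reflectorAdjunction (incl A)).unit.app P) := ⟨⟨s, hs.symm⟩⟩
  obtain ⟨X, ⟨e⟩⟩ := mem_essImage_of_unit_isSplitMono (i := incl A) (A := P)
  exact hA.isoClosed e X.property

lemma bijective_comp_unit_app (hA : IsTriangulatedSub A) (hadm : RightAdmissible A)
    {L : C ⥤ ObjectProperty.FullSubcategory (fun X : C => X ∈ rightOrth A)}
    (adj : L ⊣ incl (rightOrth A)) (X : C) {V : C} (hV : V ∈ leftOrth A) :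
    Function.Bijective (fun f : V ⟶ X => f ≫ adj.unit.app X) := by
  obtain ⟨a, v, w, hΔ⟩ := distinguished_cocone_triangle₁ (adj.unit.app X)
  have ha : a ∈ A := leftOrth_rightOrth_subset hA hadm
    (mem_leftOrth_of_distTriang_unit (fun W hW => rightOrth_shift_mem hA.shift hW 1) adj hΔ)
  exact bijective_comp_distTriang_mor₂ hΔ (hV a ha) (hV _ (hA.shift a 1 ha))

lemma bijective_counit_app_comp (hA : IsTriangulatedSub A) (hadm : LeftAdmissible A)
    {R : C ⥤ ObjectProperty.FullSubcategory (fun X : C => X ∈ leftOrth A)}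
    (adj : incl (leftOrth A) ⊣ R) (Y : C) {V : C} (hV : V ∈ rightOrth A) :
    Function.Bijective (fun f : Y ⟶ V => adj.counit.app Y ≫ f) := by
  obtain ⟨b, g, h, hΔ⟩ := distinguished_cocone_triangle (adj.counit.app Y)
  have hb : b ∈ A := rightOrth_leftOrth_subset hA hadm
    (mem_rightOrth_of_distTriang_counit
      (fun W hW => leftOrth_shift_mem hA.shift hW (-1)) adj hΔ)
  exact bijective_distTriang_mor₁_comp hΔ (hV b hb) (hV _ (hA.shift b (-1) hb))

end

/-- `R` and `L` stand for `i_{^⊥A}^!` and `i_{A^⊥}^*`, so `R ⋙ incl (leftOrth A)` is the right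
mutation `R_A` and `L ⋙ incl (rightOrth A)` the left mutation `L_A`. -/
theorem statement_2 {C : Type u} [Category.{v} C] [HasZeroObject C] [Preadditive C]
    [HasShift C ℤ] [∀ n : ℤ, (shiftFunctor C n).Additive] [Pretriangulated C]
    (A : Set C) (hA : IsTriangulatedSub A) (hadm : Admissible A)
    (R : C ⥤ ObjectProperty.FullSubcategory (fun X : C => X ∈ leftOrth A))
    (adjR : incl (leftOrth A) ⊣ R)
    (L : C ⥤ ObjectProperty.FullSubcategory (fun X : C => X ∈ rightOrth A))
    (adjL : L ⊣ incl (rightOrth A)) :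
    (∀ a ∈ A, IsZero ((R ⋙ incl (leftOrth A)).obj a)) ∧
    (incl (rightOrth A) ⋙ R).IsEquivalence ∧
    (∀ a ∈ A, IsZero ((L ⋙ incl (rightOrth A)).obj a)) ∧
    (incl (leftOrth A) ⋙ L).IsEquivalence := by
  have : ∀ X, IsIso ((adjR.comp adjL).unit.app X) := fun X =>
    adjR.isIso_comp_unit_app adjL (ObjectProperty.fullyFaithfulι _) X
      fun V => bijective_comp_unit_app hA hadm.1 adjL X.obj V.property
  have : ∀ Y, IsIso ((adjR.comp adjL).counit.app Y) := fun Y =>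
    adjR.isIso_comp_counit_app adjL (ObjectProperty.fullyFaithfulι _) Y
      fun V => bijective_counit_app_comp hA hadm.2 adjR Y.obj V.property
  exact ⟨fun a ha => adjR.isZero_obj_of_counit_app_eq_zero (ObjectProperty.fullyFaithfulι _)
      ((R.obj a).property a ha _),
    (adjR.comp adjL).toEquivalence.isEquivalence_inverse,
    fun a ha => adjL.isZero_obj_of_unit_app_eq_zero (ObjectProperty.fullyFaithfulι _)
      ((L.obj a).property a ha _),
    (adjR.comp adjL).toEquivalence.isEquivalence_functor⟩

end HPD
end

section
/- Assume T = ⟨A, B⟩ is a semiorthogonal decomposition of a triangulated category T. If both A and B are Ext-bounded and either A or B is admissible in T, then T is Ext-bounded. -/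
namespace HPD
open CategoryTheory Limits Pretriangulated

/-- A (full triangulated) subcategory `A` is Ext-bounded if for all objects `F, G` of `A`
the set `{n | Hom(F, G[n]) ≠ 0}` is finite. -/
def ExtBoundedOn {C : Type u} [Category.{v} C] [HasShift C ℤ] [Preadditive C]
    (A : Set C) : Prop :=
  ∀ F ∈ A, ∀ G ∈ A, {n : ℤ | ∃ f : F ⟶ G⟦n⟧, f ≠ 0}.Finite

/-!
Every object `X` sits in a triangle `b → X → a → b⟦1⟧` with `a ∈ A`, `b ∈ B`. By the long exact
Hom sequences, `Hom(F, G⟦n⟧) ≠ 0` forces one of `Hom(b_F, b_G⟦n⟧)`, `Hom(a_F, b_G⟦n⟧)`,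
`Hom(a_F, a_G⟦n⟧)` to be nonzero, since `Hom(b_F, a_G⟦n⟧) = 0` by semiorthogonality. The mixed
term is bounded by adjunction: if `R` is right adjoint to `A ⊆ T`, then
`Hom(a⟦-n⟧, b) ≅ Hom(a⟦-n⟧, R b)`, which puts its support inside that of the pair `a, R b` in `A`;
dually for a left adjoint to `B ⊆ T`.
-/

def extSupport {C : Type u} [Category.{v} C] [HasShift C ℤ] [Preadditive C] (X Y : C) :
    Set ℤ :=
  {n : ℤ | ∃ f : X ⟶ Y⟦n⟧, f ≠ 0}

section Preadditive

variable {C : Type*} {D : Type*} [Category C] [Category D] [Preadditive C] [Preadditive D]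

theorem _root_.CategoryTheory.Adjunction.exists_ne_zero_hom_iff {F : C ⥤ D} {G : D ⥤ C}
    (adj : F ⊣ G) [F.Additive] {X : C} {Y : D} :
    (∃ f : F.obj X ⟶ Y, f ≠ 0) ↔ ∃ g : X ⟶ G.obj Y, g ≠ 0 :=
  (adj.homAddEquiv X Y).toEquiv.exists_congr fun _ =>
    (map_ne_zero_iff _ (adj.homAddEquiv X Y).injective).symm

theorem _root_.CategoryTheory.Functor.exists_ne_zero_map_iff (F : C ⥤ D) [F.Full] [F.Faithful]
    [F.Additive] {X Y : C} : (∃ f : X ⟶ Y, f ≠ 0) ↔ ∃ g : F.obj X ⟶ F.obj Y, g ≠ 0 :=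
  (F.map_surjective.exists.trans <| exists_congr fun _ => not_congr F.map_eq_zero_iff).symm

end Preadditive

theorem mem_extSupport_iff_exists_ne_zero_from_shift {C : Type*} [Category C] [Preadditive C]
    [HasShift C ℤ] [∀ n : ℤ, (shiftFunctor C n).Additive] {X Y : C} {n : ℤ} :
    n ∈ extSupport X Y ↔ ∃ g : X⟦-n⟧ ⟶ Y, g ≠ 0 :=
  have : (shiftEquiv' C (-n) n (neg_add_cancel n)).functor.Additive :=
    inferInstanceAs (shiftFunctor C (-n)).Additive
  (shiftEquiv' C (-n) n (neg_add_cancel n)).toAdjunction.exists_ne_zero_hom_iff.symm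

section Pretriangulated

variable {C : Type*} [Category C] [HasZeroObject C] [Preadditive C]
  [HasShift C ℤ] [∀ n : ℤ, (shiftFunctor C n).Additive] [Pretriangulated C]

theorem exists_ne_zero_to_obj₁_or_obj₃ {T : Triangle C} (hT : T ∈ distTriang C) {X : C}
    {f : X ⟶ T.obj₂} (hf : f ≠ 0) :
    (∃ g : X ⟶ T.obj₁, g ≠ 0) ∨ ∃ g : X ⟶ T.obj₃, g ≠ 0 := by
  by_cases hfp : f ≫ T.mor₂ = 0
  · obtain ⟨g, rfl⟩ := Triangle.coyoneda_exact₂ T hT f hfp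
    exact .inl ⟨g, fun hg => hf (by rw [hg, zero_comp])⟩
  · exact .inr ⟨_, hfp⟩

theorem exists_ne_zero_from_obj₁_or_obj₃ {T : Triangle C} (hT : T ∈ distTriang C) {Y : C}
    {f : T.obj₂ ⟶ Y} (hf : f ≠ 0) :
    (∃ g : T.obj₁ ⟶ Y, g ≠ 0) ∨ ∃ g : T.obj₃ ⟶ Y, g ≠ 0 := by
  by_cases hif : T.mor₁ ≫ f = 0
  · obtain ⟨g, rfl⟩ := Triangle.yoneda_exact₂ T hT f hif
    exact .inr ⟨g, fun hg => hf (by rw [hg, comp_zero])⟩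
  · exact .inl ⟨_, hif⟩

theorem extSupport_to_obj₂_subset {T : Triangle C} (hT : T ∈ distTriang C) (X : C) :
    extSupport X T.obj₂ ⊆ extSupport X T.obj₁ ∪ extSupport X T.obj₃ :=
  fun _ ⟨_, hf⟩ => exists_ne_zero_to_obj₁_or_obj₃ (Triangle.shift_distinguished T hT _) hf

theorem extSupport_from_obj₂_subset {T : Triangle C} (hT : T ∈ distTriang C) (Y : C) :
    extSupport T.obj₂ Y ⊆ extSupport T.obj₁ Y ∪ extSupport T.obj₃ Y :=
  fun _ ⟨_, hf⟩ => exists_ne_zero_from_obj₁_or_obj₃ hT hf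

theorem extSupport_subset_of_rightAdmissible {A : Set C} (hA : IsTriangulatedSub A)
    {R : C ⥤ ObjectProperty.FullSubcategory (fun X : C => X ∈ A)} (adj : incl A ⊣ R)
    {a : C} (ha : a ∈ A) (Y : C) : extSupport a Y ⊆ extSupport a (R.obj Y).obj := by
  intro n hn
  rw [mem_extSupport_iff_exists_ne_zero_from_shift] at hn ⊢
  let a' : ObjectProperty.FullSubcategory (fun X : C => X ∈ A) := ⟨a⟦-n⟧, hA.shift a (-n) ha⟩
  exact ((incl A).exists_ne_zero_map_iff (X := a')).1
    ((adj.exists_ne_zero_hom_iff (X := a')).1 hn)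

theorem extSupport_subset_of_leftAdmissible {B : Set C} (hB : IsTriangulatedSub B)
    {L : C ⥤ ObjectProperty.FullSubcategory (fun X : C => X ∈ B)} (adj : L ⊣ incl B)
    {b : C} (hb : b ∈ B) (X : C) : extSupport X b ⊆ extSupport (L.obj X).obj b := by
  intro n hn
  let b' : ObjectProperty.FullSubcategory (fun X : C => X ∈ B) := ⟨b⟦n⟧, hB.shift b n hb⟩
  have := adj.left_adjoint_additive
  exact ((incl B).exists_ne_zero_map_iff (Y := b')).1
    ((adj.exists_ne_zero_hom_iff (Y := b')).2 hn)

theorem extSupport_finite_of_admissible {A B : Set C} (hA : IsTriangulatedSub A)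
    (hB : IsTriangulatedSub B) (hAb : ExtBoundedOn A) (hBb : ExtBoundedOn B)
    (hadm : RightAdmissible A ∨ LeftAdmissible B) {a b : C} (ha : a ∈ A) (hb : b ∈ B) :
    (extSupport a b).Finite := by
  rcases hadm with ⟨R, ⟨adj⟩⟩ | ⟨L, ⟨adj⟩⟩
  · exact (hAb a ha _ (R.obj b).property).subset
      (extSupport_subset_of_rightAdmissible hA adj ha b)
  · exact (hBb _ (L.obj a).property b hb).subset
      (extSupport_subset_of_leftAdmissible hB adj hb a)

namespace IsSODOn

variable {S A B : Set C}

theorem exists_distTriang (hsod : IsSODOn S ![A, B]) (hB : IsTriangulatedSub B) {X : C}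
    (hX : X ∈ S) : ∃ (b a : C) (i : b ⟶ X) (p : X ⟶ a) (δ : a ⟶ b⟦(1 : ℤ)⟧),
      Triangle.mk i p δ ∈ distTriang C ∧ b ∈ B ∧ a ∈ A := by
  obtain ⟨F, f, rfl, hlast, hcone⟩ := hsod.filtration X hX
  obtain ⟨a, p, δ, ha, hT₀⟩ := hcone 0
  obtain ⟨Q, g, _, hQ, hT₁⟩ := hcone 1
  -- `F 2 = 0`, so `F 1` is isomorphic to the second cone, which lies in `B`.
  have : IsIso g := (Triangle.isZero₁_iff_isIso₂ _ hT₁).1 hlast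
  exact ⟨_, a, f 0, p, δ, hT₀, hB.isoClosed (asIso g).symm hQ, ha⟩

theorem extSupport_eq_empty (hsod : IsSODOn S ![A, B]) (hA : IsTriangulatedSub A) {a b : C}
    (hb : b ∈ B) (ha : a ∈ A) : extSupport b a = ∅ :=
  Set.eq_empty_of_forall_notMem fun n ⟨f, hf⟩ =>
    hf (hsod.semiorthogonal (show (0 : Fin 2) < 1 by decide) b hb _ (hA.shift a n ha) f)

end IsSODOn

end Pretriangulated

/-- If `T = ⟨A, B⟩` is a semiorthogonal decomposition, where both `A` and `B` are
Ext-bounded and either `A` or `B` is admissible, then `T` is Ext-bounded. -/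
theorem statement_8 {C : Type u} [Category.{v} C] [HasZeroObject C] [Preadditive C]
    [HasShift C ℤ] [∀ n : ℤ, (shiftFunctor C n).Additive] [Pretriangulated C]
    (A B : Set C) (hA : IsTriangulatedSub A) (hB : IsTriangulatedSub B)
    (hsod : IsSODOn Set.univ ![A, B])
    (hAb : ExtBoundedOn A) (hBb : ExtBoundedOn B)
    (hadm : Admissible A ∨ Admissible B) :
    ExtBoundedOn (Set.univ : Set C) := by
  intro F _ G _
  obtain ⟨bF, aF, _, _, _, hF, hbF, haF⟩ := hsod.exists_distTriang hB (Set.mem_univ F)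
  obtain ⟨bG, aG, _, _, _, hG, hbG, haG⟩ := hsod.exists_distTriang hB (Set.mem_univ G)
  have hcross : (extSupport aF bG).Finite :=
    extSupport_finite_of_admissible hA hB hAb hBb (hadm.imp (·.1) (·.2)) haF hbG
  show (extSupport F G).Finite
  refine (((hBb _ hbF _ hbG).union hcross).union (hAb _ haF _ haG)).subset ?_
  calc extSupport F G ⊆ extSupport F bG ∪ extSupport F aG := extSupport_to_obj₂_subset hG F
    _ ⊆ (extSupport bF bG ∪ extSupport aF bG) ∪ (extSupport bF aG ∪ extSupport aF aG) :=
        Set.union_subset_union (extSupport_from_obj₂_subset hF bG)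
          (extSupport_from_obj₂_subset hF aG)
    _ = (extSupport bF bG ∪ extSupport aF bG) ∪ extSupport aF aG := by
        rw [hsod.extSupport_eq_empty hA hbF haG, Set.empty_union]

end HPD
end

section
/- A right splitting exact functor Φ : B → A between triangulated categories admits a right adjoint; a left splitting exact functor admits a left adjoint. -/
namespace HPD
open CategoryTheory Limits Pretriangulated

universe v₂ u₂ v₁ u₁

variable {B : Type u₁} [Category.{v₁} B] {A : Type u₂} [Category.{v₂} A]

/-- The kernel of a functor: the full subcategory of objects sent to zero. -/
def kerSet (Φ : B ⥤ A) : Set B := {X : B | IsZero (Φ.obj X)}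

/-- The image of a functor: the objects isomorphic to `Φ X` for some `X`. -/
def imSet (Φ : B ⥤ A) : Set A := {Y : A | ∃ X : B, Nonempty (Φ.obj X ≅ Y)}

section
variable [Preadditive B]

/-- An exact functor `Φ : B → A` is right splitting if `Ker Φ` is right admissible in `B`,
the restriction of `Φ` to `(Ker Φ)^⊥` is fully faithful, and `Im Φ` is right admissible
in `A`. -/
structure RightSplitting (Φ : B ⥤ A) : Prop where
  ker_radm : RightAdmissible (kerSet Φ)
  full : (incl (rightOrth (kerSet Φ)) ⋙ Φ).Full
  faithful : (incl (rightOrth (kerSet Φ)) ⋙ Φ).Faithful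
  im_radm : RightAdmissible (imSet Φ)

/-- An exact functor `Φ : B → A` is left splitting if `Ker Φ` is left admissible in `B`,
the restriction of `Φ` to `^⊥(Ker Φ)` is fully faithful, and `Im Φ` is left admissible
in `A`. -/
structure LeftSplitting (Φ : B ⥤ A) : Prop where
  ker_ladm : LeftAdmissible (kerSet Φ)
  full : (incl (leftOrth (kerSet Φ)) ⋙ Φ).Full
  faithful : (incl (leftOrth (kerSet Φ)) ⋙ Φ).Faithful
  im_ladm : LeftAdmissible (imSet Φ)

end

end HPD
namespace HPD
open CategoryTheory Limits Pretriangulated Function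

section Adjoints

variable {C : Type*} [Category C] {D : Type*} [Category D]

lemma isLeftAdjoint_of_bijective_map_comp (F : C ⥤ D)
    (h : ∀ Y : D, ∃ (G : C) (c : F.obj G ⟶ Y), ∀ X, Bijective fun g : X ⟶ G => F.map g ≫ c) :
    F.IsLeftAdjoint := by
  choose G c hc using h
  let e X Y : (F.obj X ⟶ Y) ≃ (X ⟶ G Y) := (Equiv.ofBijective _ (hc Y X)).symm
  refine (Adjunction.adjunctionOfEquivRight e fun X' X Y f g => ?_).isLeftAdjoint
  rw [Equiv.symm_apply_eq, Equiv.ofBijective_apply, F.map_comp, Category.assoc]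
  exact congrArg (F.map f ≫ ·) ((Equiv.ofBijective _ (hc Y X)).apply_symm_apply g).symm

lemma isRightAdjoint_of_bijective_comp_map (G : D ⥤ C)
    (h : ∀ X : C, ∃ (F : D) (c : X ⟶ G.obj F), ∀ Y, Bijective fun g : F ⟶ Y => c ≫ G.map g) :
    G.IsRightAdjoint := by
  choose F c hc using h
  refine (Adjunction.adjunctionOfEquivLeft (fun X Y => Equiv.ofBijective _ (hc X Y))
    fun X Y Y' g f => ?_).isRightAdjoint
  simp

lemma RightAdmissible.exists_coreflection {S : Set C} (hS : RightAdmissible S) (X : C) :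
    ∃ (R : C) (ε : R ⟶ X), R ∈ S ∧ ∀ a ∈ S, Bijective fun v : a ⟶ R => v ≫ ε := by
  obtain ⟨r, ⟨adj⟩⟩ := hS.exists_rightAdjoint
  refine ⟨(r.obj X).obj, adj.counit.app X, (r.obj X).property, fun a ha => ?_⟩
  have h : (fun v : a ⟶ (r.obj X).obj => v ≫ adj.counit.app X) =
      (adj.homEquiv ⟨a, ha⟩ X).symm ∘ ObjectProperty.homMk := by
    funext v
    exact (adj.homEquiv_counit ⟨a, ha⟩ X (ObjectProperty.homMk v)).symm
  rw [h]
  exact (adj.homEquiv _ _).symm.bijective.comp InducedCategory.homEquiv.symm.bijective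

lemma LeftAdmissible.exists_reflection {S : Set C} (hS : LeftAdmissible S) (X : C) :
    ∃ (L : C) (η : X ⟶ L), L ∈ S ∧ ∀ a ∈ S, Bijective fun v : L ⟶ a => η ≫ v := by
  obtain ⟨l, ⟨adj⟩⟩ := hS.exists_leftAdjoint
  refine ⟨(l.obj X).obj, adj.unit.app X, (l.obj X).property, fun a ha => ?_⟩
  have h : (fun v : (l.obj X).obj ⟶ a => adj.unit.app X ≫ v) =
      adj.homEquiv X ⟨a, ha⟩ ∘ ObjectProperty.homMk := by
    funext v
    exact (adj.homEquiv_unit X ⟨a, ha⟩ (ObjectProperty.homMk v)).symm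
  rw [h]
  exact (adj.homEquiv _ _).bijective.comp InducedCategory.homEquiv.symm.bijective

lemma map_bijective_of_mem {S : Set C} (F : C ⥤ D) [(incl S ⋙ F).Full] [(incl S ⋙ F).Faithful]
    {X Y : C} (hX : X ∈ S) (hY : Y ∈ S) : Bijective (F.map : (X ⟶ Y) → (F.obj X ⟶ F.obj Y)) :=
  ((Functor.FullyFaithful.ofFullyFaithful (incl S ⋙ F)).map_bijective ⟨X, hX⟩ ⟨Y, hY⟩).comp
    InducedCategory.homEquiv.symm.bijective

end Adjoints

section Shift

variable {C : Type*} [Category C] [HasShift C ℤ]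

lemma injective_comp_shift_map {a Y Y' : C} (f : Y ⟶ Y') (n : ℤ)
    (hf : Injective fun v : a⟦-n⟧ ⟶ Y => v ≫ f) :
    Injective fun u : a ⟶ Y⟦n⟧ => u ≫ f⟦n⟧' := by
  let adj := (shiftEquiv C n).symm.toAdjunction
  have key (u : a ⟶ Y⟦n⟧) :
      (adj.homEquiv a Y').symm (u ≫ f⟦n⟧') = (adj.homEquiv a Y).symm u ≫ f :=
    adj.homEquiv_naturality_right_symm u f
  intro u₁ u₂ hu
  refine (adj.homEquiv a Y).symm.injective (hf ?_)
  calc (adj.homEquiv a Y).symm u₁ ≫ f = (adj.homEquiv a Y').symm (u₁ ≫ f⟦n⟧') := (key u₁).symm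
    _ = (adj.homEquiv a Y).symm u₂ ≫ f := (congrArg _ hu).trans (key u₂)

lemma injective_shift_map_comp {Y Y' a : C} (f : Y ⟶ Y') (n : ℤ)
    (hf : Injective fun v : Y' ⟶ a⟦-n⟧ => f ≫ v) :
    Injective fun u : Y'⟦n⟧ ⟶ a => f⟦n⟧' ≫ u := by
  let adj := (shiftEquiv C n).toAdjunction
  have key (u : Y'⟦n⟧ ⟶ a) : adj.homEquiv Y a (f⟦n⟧' ≫ u) = f ≫ adj.homEquiv Y' a u :=
    adj.homEquiv_naturality_left f u
  intro u₁ u₂ hu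
  refine (adj.homEquiv Y' a).injective (hf ?_)
  calc f ≫ adj.homEquiv Y' a u₁ = adj.homEquiv Y a (f⟦n⟧' ≫ u₁) := (key u₁).symm
    _ = f ≫ adj.homEquiv Y' a u₂ := (congrArg _ hu).trans (key u₂)

end Shift

lemma shift_mem_kerSet {B A : Type*} [Category B] [Category A] [HasZeroMorphisms A]
    [HasShift B ℤ] [HasShift A ℤ] (Φ : B ⥤ A) [Φ.CommShift ℤ] {X : B} (hX : X ∈ kerSet Φ)
    (n : ℤ) : X⟦n⟧ ∈ kerSet Φ :=
  ((shiftFunctor A n).map_isZero hX).of_iso ((Φ.commShiftIso n).app X)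

section Triangulated

variable {C : Type*} [Category C] [HasZeroObject C] [Preadditive C] [HasShift C ℤ]
  [∀ n : ℤ, (shiftFunctor C n).Additive] [Pretriangulated C] {K : Set C}

lemma bijective_mor₂_comp_of_mem_rightOrth (hK : ∀ X ∈ K, X⟦(1 : ℤ)⟧ ∈ K) {T : Triangle C}
    (hT : T ∈ distTriang C) (h₁ : T.obj₁ ∈ K) {Z : C} (hZ : Z ∈ rightOrth K) :
    Bijective fun g : T.obj₃ ⟶ Z => T.mor₂ ≫ g := by
  refine ⟨(injective_iff_map_eq_zero (Preadditive.leftComp Z T.mor₂)).2 fun g hg => ?_,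
    fun f => ?_⟩
  · obtain ⟨k, rfl⟩ := Triangle.yoneda_exact₃ T hT g hg
    rw [hZ _ (hK _ h₁) k, comp_zero]
  · obtain ⟨g, rfl⟩ := Triangle.yoneda_exact₂ T hT f (hZ _ h₁ _)
    exact ⟨g, rfl⟩

lemma bijective_comp_mor₁_of_mem_leftOrth (hK : ∀ X ∈ K, X⟦(-1 : ℤ)⟧ ∈ K) {T : Triangle C}
    (hT : T ∈ distTriang C) (h₃ : T.obj₃ ∈ K) {Z : C} (hZ : Z ∈ leftOrth K) :
    Bijective fun g : Z ⟶ T.obj₁ => g ≫ T.mor₁ := by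
  refine ⟨(injective_iff_map_eq_zero (Preadditive.rightComp Z T.mor₁)).2 fun g hg => ?_,
    fun f => ?_⟩
  · obtain ⟨k, rfl⟩ := Triangle.coyoneda_exact₂ _ (inv_rot_of_distTriang T hT) g hg
    rw [hZ _ (hK _ h₃) k]
    exact zero_comp
  · obtain ⟨g, rfl⟩ := Triangle.coyoneda_exact₂ T hT f (hZ _ h₃ _)
    exact ⟨g, rfl⟩

lemma obj₃_mem_rightOrth (hK : ∀ X ∈ K, X⟦(-1 : ℤ)⟧ ∈ K) {T : Triangle C}
    (hT : T ∈ distTriang C) (hε : ∀ a ∈ K, Bijective fun v : a ⟶ T.obj₁ => v ≫ T.mor₁) :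
    T.obj₃ ∈ rightOrth K := by
  intro a ha f
  have hw : f ≫ T.mor₃ = 0 := injective_comp_shift_map T.mor₁ 1 (hε _ (hK a ha)).1 <| by
    dsimp only
    rw [Category.assoc, comp_distTriang_mor_zero₃₁ _ hT, comp_zero, zero_comp]
  obtain ⟨g, rfl⟩ := Triangle.coyoneda_exact₃ _ hT f hw
  obtain ⟨v, rfl⟩ := (hε a ha).2 g
  simp [comp_distTriang_mor_zero₁₂ _ hT]

lemma obj₁_mem_leftOrth (hK : ∀ X ∈ K, X⟦(1 : ℤ)⟧ ∈ K) {T : Triangle C}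
    (hT : T ∈ distTriang C) (hη : ∀ b ∈ K, Bijective fun v : T.obj₃ ⟶ b => T.mor₂ ≫ v) :
    T.obj₁ ∈ leftOrth K := by
  intro b hb f
  have h : T.mor₂⟦(-1 : ℤ)⟧' ≫ T.invRotate.mor₁ = 0 := by
    have h₂₃ : T.mor₂⟦(-1 : ℤ)⟧' ≫ T.mor₃⟦(-1 : ℤ)⟧' = 0 := by
      rw [← Functor.map_comp, comp_distTriang_mor_zero₂₃ _ hT, Functor.map_zero]
    change T.mor₂⟦(-1 : ℤ)⟧' ≫ (-(T.mor₃⟦(-1 : ℤ)⟧' ≫ _)) = 0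
    rw [Preadditive.comp_neg, neg_eq_zero]
    exact (Category.assoc _ _ _).symm.trans ((congrArg (· ≫ _) h₂₃).trans zero_comp)
  have hw : T.invRotate.mor₁ ≫ f = 0 :=
    injective_shift_map_comp T.mor₂ (-1) (hη _ (by simpa using hK b hb)).1 <|
      ((Category.assoc _ _ _).symm.trans ((congrArg (· ≫ f) h).trans zero_comp)).trans
        comp_zero.symm
  obtain ⟨g, rfl⟩ := Triangle.yoneda_exact₂ _ (inv_rot_of_distTriang _ hT) f hw
  obtain ⟨v, rfl⟩ := (hη b hb).2 g
  change T.mor₁ ≫ T.mor₂ ≫ v = 0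
  rw [← Category.assoc, comp_distTriang_mor_zero₁₂ _ hT, zero_comp]

lemma exists_distTriang_mem_rightOrth (hK : ∀ X ∈ K, X⟦(-1 : ℤ)⟧ ∈ K)
    (hadm : RightAdmissible K) (X : C) :
    ∃ (k Q : C) (u : k ⟶ X) (η : X ⟶ Q) (w : Q ⟶ k⟦(1 : ℤ)⟧),
      Triangle.mk u η w ∈ distTriang C ∧ k ∈ K ∧ Q ∈ rightOrth K := by
  obtain ⟨k, ε, hk, hε⟩ := hadm.exists_coreflection X
  obtain ⟨Q, η, w, hT⟩ := distinguished_cocone_triangle ε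
  exact ⟨k, Q, ε, η, w, hT, hk, obj₃_mem_rightOrth hK hT hε⟩

lemma exists_distTriang_mem_leftOrth (hK : ∀ X ∈ K, X⟦(1 : ℤ)⟧ ∈ K)
    (hadm : LeftAdmissible K) (X : C) :
    ∃ (Q k : C) (η : Q ⟶ X) (u : X ⟶ k) (w : k ⟶ Q⟦(1 : ℤ)⟧),
      Triangle.mk η u w ∈ distTriang C ∧ Q ∈ leftOrth K ∧ k ∈ K := by
  obtain ⟨k, ε, hk, hε⟩ := hadm.exists_reflection X
  obtain ⟨Q, η, w, hT⟩ := distinguished_cocone_triangle₁ ε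
  exact ⟨Q, k, η, ε, w, hT, obj₁_mem_leftOrth hK hT hε, hk⟩

end Triangulated

section Splitting

variable {B : Type*} [Category B] [HasZeroObject B] [Preadditive B] [HasShift B ℤ]
  [∀ n : ℤ, (shiftFunctor B n).Additive] [Pretriangulated B]
  {A : Type*} [Category A] [HasZeroObject A] [Preadditive A] [HasShift A ℤ]
  [∀ n : ℤ, (shiftFunctor A n).Additive] [Pretriangulated A]
  {Φ : B ⥤ A} [Φ.CommShift ℤ] [Φ.IsTriangulated]

lemma RightSplitting.exists_reflection (hΦ : RightSplitting Φ) (X : B) :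
    ∃ (Q : B) (η : X ⟶ Q), Q ∈ rightOrth (kerSet Φ) ∧ IsIso (Φ.map η) ∧
      ∀ Z ∈ rightOrth (kerSet Φ), Bijective fun g : Q ⟶ Z => η ≫ g := by
  obtain ⟨k, Q, _, η, _, hT, hk, hQ⟩ :=
    exists_distTriang_mem_rightOrth (fun _ h => shift_mem_kerSet Φ h _) hΦ.ker_radm X
  exact ⟨Q, η, hQ, (Triangle.isZero₁_iff_isIso₂ _ (Φ.map_distinguished _ hT)).1 hk,
    fun Z hZ => bijective_mor₂_comp_of_mem_rightOrth (fun _ h => shift_mem_kerSet Φ h _) hT hk hZ⟩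

lemma LeftSplitting.exists_coreflection (hΦ : LeftSplitting Φ) (X : B) :
    ∃ (Q : B) (η : Q ⟶ X), Q ∈ leftOrth (kerSet Φ) ∧ IsIso (Φ.map η) ∧
      ∀ Z ∈ leftOrth (kerSet Φ), Bijective fun g : Z ⟶ Q => g ≫ η := by
  obtain ⟨Q, k, η, _, _, hT, hQ, hk⟩ :=
    exists_distTriang_mem_leftOrth (fun _ h => shift_mem_kerSet Φ h _) hΦ.ker_ladm X
  exact ⟨Q, η, hQ, (Triangle.isZero₃_iff_isIso₁ _ (Φ.map_distinguished _ hT)).1 hk,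
    fun Z hZ => bijective_comp_mor₁_of_mem_leftOrth (fun _ h => shift_mem_kerSet Φ h _) hT hk hZ⟩

lemma RightSplitting.map_bijective_of_mem_rightOrth (hΦ : RightSplitting Φ) {Z : B}
    (hZ : Z ∈ rightOrth (kerSet Φ)) (X : B) :
    Bijective (Φ.map : (X ⟶ Z) → (Φ.obj X ⟶ Φ.obj Z)) := by
  obtain ⟨Q, η, hQ, hη, hbij⟩ := hΦ.exists_reflection X
  have := hΦ.full
  have := hΦ.faithful
  have h : Φ.map ∘ (fun g : Q ⟶ Z => η ≫ g) = (fun f => Φ.map η ≫ f) ∘ Φ.map :=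
    funext fun g => Φ.map_comp η g
  rw [← Bijective.of_comp_iff _ (hbij Z hZ), h]
  exact ((isIso_iff_coyoneda_map_bijective _).1 hη _).comp (map_bijective_of_mem Φ hQ hZ)

lemma LeftSplitting.map_bijective_of_mem_leftOrth (hΦ : LeftSplitting Φ) {Z : B}
    (hZ : Z ∈ leftOrth (kerSet Φ)) (X : B) :
    Bijective (Φ.map : (Z ⟶ X) → (Φ.obj Z ⟶ Φ.obj X)) := by
  obtain ⟨Q, η, hQ, hη, hbij⟩ := hΦ.exists_coreflection X
  have := hΦ.full
  have := hΦ.faithful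
  have h : Φ.map ∘ (fun g : Z ⟶ Q => g ≫ η) = (fun f => f ≫ Φ.map η) ∘ Φ.map :=
    funext fun g => Φ.map_comp g η
  rw [← Bijective.of_comp_iff _ (hbij Z hZ), h]
  exact ((isIso_iff_yoneda_map_bijective _).1 hη _).comp (map_bijective_of_mem Φ hZ hQ)

lemma RightSplitting.exists_mem_rightOrth_iso (hΦ : RightSplitting Φ) {Y : A}
    (hY : Y ∈ imSet Φ) : ∃ Z ∈ rightOrth (kerSet Φ), Nonempty (Φ.obj Z ≅ Y) := by
  obtain ⟨X, ⟨e⟩⟩ := hY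
  obtain ⟨Q, η, hQ, hη, -⟩ := hΦ.exists_reflection X
  exact ⟨Q, hQ, ⟨(asIso (Φ.map η)).symm ≪≫ e⟩⟩

lemma LeftSplitting.exists_mem_leftOrth_iso (hΦ : LeftSplitting Φ) {Y : A}
    (hY : Y ∈ imSet Φ) : ∃ Z ∈ leftOrth (kerSet Φ), Nonempty (Φ.obj Z ≅ Y) := by
  obtain ⟨X, ⟨e⟩⟩ := hY
  obtain ⟨Q, η, hQ, hη, -⟩ := hΦ.exists_coreflection X
  exact ⟨Q, hQ, ⟨asIso (Φ.map η) ≪≫ e⟩⟩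

theorem RightSplitting.isLeftAdjoint (hΦ : RightSplitting Φ) : Φ.IsLeftAdjoint := by
  refine isLeftAdjoint_of_bijective_map_comp Φ fun Y => ?_
  obtain ⟨R, ε, hR, hε⟩ := hΦ.im_radm.exists_coreflection Y
  obtain ⟨Z, hZ, ⟨e⟩⟩ := hΦ.exists_mem_rightOrth_iso hR
  refine ⟨Z, e.hom ≫ ε, fun X => ?_⟩
  simpa [Function.comp_def] using (hε _ ⟨X, ⟨Iso.refl _⟩⟩).comp
    (e.homToEquiv.bijective.comp (hΦ.map_bijective_of_mem_rightOrth hZ X))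

theorem LeftSplitting.isRightAdjoint (hΦ : LeftSplitting Φ) : Φ.IsRightAdjoint := by
  refine isRightAdjoint_of_bijective_comp_map Φ fun Y => ?_
  obtain ⟨L, η, hL, hη⟩ := hΦ.im_ladm.exists_reflection Y
  obtain ⟨Z, hZ, ⟨e⟩⟩ := hΦ.exists_mem_leftOrth_iso hL
  refine ⟨Z, η ≫ e.inv, fun X => ?_⟩
  simpa [Function.comp_def] using (hη _ ⟨X, ⟨Iso.refl _⟩⟩).comp
    (e.homFromEquiv.bijective.comp (hΦ.map_bijective_of_mem_leftOrth hZ X))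

end Splitting

/-- A right (resp. left) splitting exact functor between triangulated categories admits a
right (resp. left) adjoint. -/
theorem statement_9 {B : Type u₁} [Category.{v₁} B] [HasZeroObject B] [Preadditive B]
    [HasShift B ℤ] [∀ n : ℤ, (shiftFunctor B n).Additive] [Pretriangulated B]
    {A : Type u₂} [Category.{v₂} A] [HasZeroObject A] [Preadditive A]
    [HasShift A ℤ] [∀ n : ℤ, (shiftFunctor A n).Additive] [Pretriangulated A]
    (Φ : B ⥤ A) [Φ.CommShift ℤ] [Φ.IsTriangulated] :
    (RightSplitting Φ → Φ.IsLeftAdjoint) ∧ (LeftSplitting Φ → Φ.IsRightAdjoint) :=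
  ⟨RightSplitting.isLeftAdjoint, LeftSplitting.isRightAdjoint⟩

end HPD
end

section
/- Let D be a triangulated category with a Lefschetz decomposition D = ⟨A_0, A_1(1), …, A_{i-1}(i-1)⟩ with respect to an autoequivalence F ↦ F(1), with primitive subcategories a_k, and let α_0^* : D → A_0 be the left adjoint of the inclusion A_0 → D. Then for 1 ≤ r ≤ i one has α_0^*(⟨A_0(1), …, A_{r-1}(r)⟩) ⊆ ⟨α_0^*(a_0(1)), …, α_0^*(a_{r-1}(r))⟩. -/
namespace HPD
open CategoryTheory Limits Pretriangulated

variable {D : Type u} [Category.{v} D]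

/-- Iterated composition of an endofunctor (`funPow τ n = τ^n`, applied `n` times). -/
def funPow (τ : D ⥤ D) : ℕ → D ⥤ D
  | 0 => 𝟭 D
  | n + 1 => funPow τ n ⋙ τ

/-- The essential image of a set of objects under an endofunctor. -/
def essImg (F : D ⥤ D) (A : Set D) : Set D := {Y : D | ∃ X ∈ A, Nonempty (F.obj X ≅ Y)}

/-- `twist τ n A` is the subcategory `A(n)`, the image of `A` under the `n`-th power of the
autoequivalence `τ : F ↦ F(1)`. -/
def twist (τ : D ⥤ D) (n : ℕ) (A : Set D) : Set D := essImg (funPow τ n) A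

section
variable [Preadditive D]

/-- The `k`-th primitive subcategory `a_k = A_{k+1}^⊥ ∩ A_k` of a Lefschetz chain. -/
def prim (A : ℕ → Set D) (k : ℕ) : Set D := A k ∩ rightOrth (A (k + 1))

end

section
variable [HasZeroObject D] [Preadditive D] [HasShift D ℤ]
  [∀ n : ℤ, (shiftFunctor D n).Additive] [Pretriangulated D]

/-- A Lefschetz decomposition `D = ⟨A_0, A_1(1), …, A_{m-1}(m-1)⟩` of a triangulated category
`D` with respect to an autoequivalence `τ : F ↦ F(1)`: a chain
`0 ⊆ A_{m-1} ⊆ ⋯ ⊆ A_1 ⊆ A_0` of admissible full triangulated subcategories (we set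
`A_k = 0` for `k ≥ m`) such that the subcategories `A_k(k)` form a semiorthogonal
decomposition of `D`. -/
structure LefschetzData (τ : D ⥤ D) (A : ℕ → Set D) (m : ℕ) : Prop where
  pos : 0 < m
  equiv : τ.IsEquivalence
  chain : ∀ k : ℕ, A (k + 1) ⊆ A k
  triangSub : ∀ k : ℕ, IsTriangulatedSub (A k)
  admissible : ∀ k : ℕ, Admissible (A k)
  vanish : ∀ k : ℕ, m ≤ k → ∀ X ∈ A k, IsZero X
  sod : IsSODOn Set.univ (fun k : Fin m => twist τ (k : ℕ) (A (k : ℕ)))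

end

end HPD
namespace HPD
open CategoryTheory Limits Pretriangulated ZeroObject

variable {D : Type u} [Category.{v} D]

theorem funPow_isEquivalence (τ : D ⥤ D) [τ.IsEquivalence] :
    ∀ n : ℕ, (funPow τ n).IsEquivalence
  | 0 => inferInstanceAs (Functor.IsEquivalence (𝟭 D))
  | n + 1 =>
      have := funPow_isEquivalence τ n
      inferInstanceAs (Functor.IsEquivalence (funPow τ n ⋙ τ))

theorem isLocal_map_of_isLocal_inverseImage {C : Type*} [Category C] {P : ObjectProperty D}
    [P.IsClosedUnderIsomorphisms] (G : C ⥤ D) [G.Full] [G.Faithful] [G.EssSurj] {X Y : C}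
    {f : X ⟶ Y}
    (hf : (P.inverseImage G).isLocal f) : P.isLocal (G.map f) := by
  intro Z hZ
  let e := G.objObjPreimageIso Z
  have hPre : P (G.obj (G.objPreimage Z)) := P.prop_of_iso e.symm hZ
  let E : ∀ W : C, (W ⟶ G.objPreimage Z) ≃ (G.obj W ⟶ Z) := fun W =>
    (Functor.FullyFaithful.ofFullyFaithful G).homEquiv.trans e.homToEquiv
  have key : (fun s : G.obj Y ⟶ Z => G.map f ≫ s) = E X ∘ (f ≫ ·) ∘ (E Y).symm := by
    funext s
    simp [E]
  rw [key]
  exact ((E X).bijective.comp (hf _ hPre)).comp (E Y).symm.bijective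

theorem range_ι_obj (P : ObjectProperty D) : (· ∈ Set.range P.ι.obj) = P := by
  ext X
  exact ⟨fun ⟨Y, hY⟩ => hY ▸ Y.2, fun hX => ⟨⟨X, hX⟩, rfl⟩⟩

theorem isIso_map_of_isLocal {P : ObjectProperty D} {L : D ⥤ P.FullSubcategory} (adj : L ⊣ P.ι)
    {X Y : D} {f : X ⟶ Y} (hf : P.isLocal f) : IsIso (L.map f) := by
  rw [← ObjectProperty.isLocal_iff_isIso_map adj, range_ι_obj]
  exact hf

section Triang

variable [HasZeroObject D] [Preadditive D] [HasShift D ℤ]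
  [∀ n : ℤ, (shiftFunctor D n).Additive] [Pretriangulated D]

theorem IsTriangulatedSub.isTriangulated {A : Set D} (hA : IsTriangulatedSub A) :
    ObjectProperty.IsTriangulated (· ∈ A) where
  exists_zero := ⟨0, isZero_zero D, hA.zero _ (isZero_zero D)⟩
  isStableUnderShiftBy n := ⟨fun X hX => hA.shift X n hX⟩
  ext₂' T hT h₁ h₃ := ObjectProperty.le_isoClosure _ _ (hA.ext₂ T hT h₁ h₃)

theorem IsTriangulatedSub.isClosedUnderIsomorphisms {A : Set D} (hA : IsTriangulatedSub A) :
    ObjectProperty.IsClosedUnderIsomorphisms (· ∈ A) :=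
  ⟨fun e hX => hA.isoClosed e hX⟩

theorem IsTriangulatedSub.preimage {B : Set D} (hB : IsTriangulatedSub B) (F : D ⥤ D)
    [F.CommShift ℤ] [F.IsTriangulated] : IsTriangulatedSub (F.obj ⁻¹' B) where
  zero _ hX := hB.zero _ (F.map_isZero hX)
  isoClosed _ _ e hX := hB.isoClosed (F.mapIso e) hX
  shift X n hX := hB.isoClosed ((F.commShiftIso n).app X).symm (hB.shift _ n hX)
  ext₂ T hT h₁ h₃ := hB.ext₂ _ (F.map_distinguished T hT) h₁ h₃

theorem subset_triangulatedClosure (S : Set D) : S ⊆ triangulatedClosure S :=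
  fun _ hX _ _ hS => hS hX

theorem triangulatedClosure_subset {S B : Set D} (hB : IsTriangulatedSub B) (hS : S ⊆ B) :
    triangulatedClosure S ⊆ B :=
  fun _ hX => hX B hB hS

theorem isTriangulatedSub_triangulatedClosure (S : Set D) :
    IsTriangulatedSub (triangulatedClosure S) where
  zero X hX _ hA _ := hA.zero X hX
  isoClosed _ _ e hX A hA hS := hA.isoClosed e (hX A hA hS)
  shift X n hX A hA hS := hA.shift X n (hX A hA hS)
  ext₂ T hT h₁ h₃ A hA hS := hA.ext₂ T hT (h₁ A hA hS) (h₃ A hA hS)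

section Adjoints

variable {P : ObjectProperty D} [P.IsTriangulated]

theorem isTriangulated_leftAdjoint_ι {L : D ⥤ P.FullSubcategory} (adj : L ⊣ P.ι) :
    letI := adj.leftAdjointCommShift ℤ
    L.IsTriangulated :=
  letI := adj.leftAdjointCommShift ℤ
  have := adj.commShift_of_rightAdjoint ℤ
  adj.isTriangulated_leftAdjoint

theorem isTriangulated_rightAdjoint_ι {R : D ⥤ P.FullSubcategory} (adj : P.ι ⊣ R) :
    letI := adj.rightAdjointCommShift ℤ
    R.IsTriangulated :=
  letI := adj.rightAdjointCommShift ℤ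
  have := adj.commShift_of_leftAdjoint ℤ
  adj.isTriangulated_rightAdjoint

theorem rightOrthogonal_of_counit_cone {R : D ⥤ P.FullSubcategory} (adj : P.ι ⊣ R)
    {X Q : D} {q : X ⟶ Q} {δ : Q ⟶ (P.ι.obj (R.obj X))⟦(1 : ℤ)⟧}
    (hT : Triangle.mk (adj.counit.app X) q δ ∈ distTriang D) : P.rightOrthogonal Q := by
  let := adj.rightAdjointCommShift ℤ
  have := isTriangulated_rightAdjoint_ι adj
  have hiso : IsIso (R.map (adj.counit.app X)) := by
    rw [← ObjectProperty.isColocal_iff_isIso_map adj]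
    exact ObjectProperty.isColocal_adj_counit_app adj X
  have hRQ : IsZero (R.obj Q) :=
    (Triangle.isZero₃_iff_isIso₁ _ (R.map_distinguished _ hT)).2 hiso
  intro b f hb
  obtain ⟨g, rfl⟩ := (adj.homEquiv ⟨b, hb⟩ Q).symm.surjective f
  rw [hRQ.eq_of_tgt g 0, Adjunction.homEquiv_counit, Functor.map_zero, zero_comp]

end Adjoints

theorem IsTriangulatedSub.preimage_reflection {A B : Set D} (hA : IsTriangulatedSub A)
    (hB : IsTriangulatedSub B) {L : D ⥤ ObjectProperty.FullSubcategory (· ∈ A)}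
    (adj : L ⊣ incl A) : IsTriangulatedSub {X | (incl A).obj (L.obj X) ∈ B} := by
  have := hA.isTriangulated
  let := adj.leftAdjointCommShift ℤ
  have := isTriangulated_leftAdjoint_ι adj
  exact hB.preimage (L ⋙ incl A)

theorem LefschetzData.rightOrthogonal_of_twist_mem {τ : D ⥤ D} {A : ℕ → Set D} {m : ℕ}
    (hL : LefschetzData τ A m) (k : ℕ) {b : D} (hb : (funPow τ (k + 1)).obj b ∈ A 0) :
    ObjectProperty.rightOrthogonal (· ∈ A (k + 1)) b := by
  intro c f hc
  rcases lt_or_ge (k + 1) m with hlt | hge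
  · have := hL.equiv
    have := funPow_isEquivalence τ (k + 1)
    apply (funPow τ (k + 1)).map_injective
    rw [Functor.map_zero]
    exact hL.sod.semiorthogonal (i := ⟨k + 1, hlt⟩) (j := ⟨0, hL.pos⟩) (Nat.succ_pos k)
      _ ⟨c, hc, ⟨Iso.refl _⟩⟩ _ ⟨_, hb, ⟨Iso.refl _⟩⟩ _
  · exact (hL.vanish _ hge c hc).eq_of_src f 0

theorem LefschetzData.exists_prim_reflection_iso {τ : D ⥤ D} {A : ℕ → Set D} {m : ℕ}
    (hL : LefschetzData τ A m) {L : D ⥤ ObjectProperty.FullSubcategory (· ∈ A 0)}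
    (adj : L ⊣ incl (A 0)) (k : ℕ) {X : D} (hX : X ∈ twist τ (k + 1) (A k)) :
    ∃ Z ∈ twist τ (k + 1) (prim A k),
      Nonempty ((incl (A 0)).obj (L.obj Z) ≅ (incl (A 0)).obj (L.obj X)) := by
  obtain ⟨X₀, hX₀, ⟨e⟩⟩ := hX
  have := hL.equiv
  have := funPow_isEquivalence τ (k + 1)
  have := (hL.triangSub (k + 1)).isTriangulated
  have : (incl (A (k + 1))).IsLeftAdjoint := (hL.admissible (k + 1)).1
  let adj' := Adjunction.ofIsLeftAdjoint (incl (A (k + 1)))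
  obtain ⟨Q, q, δ, hT⟩ := distinguished_cocone_triangle (adj'.counit.app X₀)
  have hN : (incl (A (k + 1))).obj ((incl (A (k + 1))).rightAdjoint.obj X₀) ∈ A (k + 1) :=
    ((incl (A (k + 1))).rightAdjoint.obj X₀).property
  have hQ : Q ∈ prim A k := by
    refine ⟨(hL.triangSub k).ext₂ _ (rot_of_distTriang _ hT) hX₀
      ((hL.triangSub k).shift _ 1 (hL.chain k hN)), fun b hb f => ?_⟩
    exact rightOrthogonal_of_counit_cone adj' hT f hb
  have hq : ObjectProperty.isLocal (· ∈ A 0) ((funPow τ (k + 1)).map q) := by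
    have := (hL.triangSub 0).isClosedUnderIsomorphisms
    refine isLocal_map_of_isLocal_inverseImage _ fun b hb => ?_
    have hb' := hL.rightOrthogonal_of_twist_mem k hb
    rw [← ObjectProperty.isLocal_trW] at hb'
    exact hb' _ (ObjectProperty.trW.mk' _ hT hN)
  have := isIso_map_of_isLocal adj hq
  exact ⟨_, ⟨Q, hQ, ⟨Iso.refl _⟩⟩,
    ⟨(incl (A 0)).mapIso ((asIso (L.map ((funPow τ (k + 1)).map q))).symm ≪≫ L.mapIso e)⟩⟩

end Triang

/-- Let `D = ⟨A_0, A_1(1), …, A_{m-1}(m-1)⟩` be a Lefschetz decomposition with respect to an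
autoequivalence `F ↦ F(1)`, with primitive subcategories `a_j`, and let `α_0^* : D → A_0` be
the left adjoint of the inclusion `A_0 → D`.  Then for `1 ≤ r ≤ m` one has
`α_0^*(⟨A_0(1), …, A_{r-1}(r)⟩) ⊆ ⟨α_0^*(a_0(1)), …, α_0^*(a_{r-1}(r))⟩`. -/
theorem statement_16 {D : Type u} [Category.{v} D] [HasZeroObject D] [Preadditive D]
    [HasShift D ℤ] [∀ n : ℤ, (shiftFunctor D n).Additive] [Pretriangulated D]
    (τ : D ⥤ D) (A : ℕ → Set D) (m : ℕ) (hL : LefschetzData τ A m)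
    (L : D ⥤ ObjectProperty.FullSubcategory (fun X : D => X ∈ A 0)) (adj : L ⊣ incl (A 0))
    (r : ℕ) (hr1 : 1 ≤ r) (hrm : r ≤ m) :
    ∀ X ∈ triangulatedClosure (⋃ k : Fin r, twist τ ((k : ℕ) + 1) (A (k : ℕ))),
      (incl (A 0)).obj (L.obj X) ∈
        triangulatedClosure (⋃ k : Fin r,
          {Y : D | ∃ Z ∈ twist τ ((k : ℕ) + 1) (prim A (k : ℕ)),
            Nonempty ((incl (A 0)).obj (L.obj Z) ≅ Y)}) := by
  set gens := ⋃ k : Fin r, {Y : D | ∃ Z ∈ twist τ ((k : ℕ) + 1) (prim A (k : ℕ)),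
    Nonempty ((incl (A 0)).obj (L.obj Z) ≅ Y)}
  have hgens := isTriangulatedSub_triangulatedClosure gens
  refine triangulatedClosure_subset ((hL.triangSub 0).preimage_reflection hgens adj) ?_
  rintro X ⟨_, ⟨k, rfl⟩, hX⟩
  obtain ⟨Z, hZ, ⟨e⟩⟩ := hL.exists_prim_reflection_iso adj k hX
  exact hgens.isoClosed e
    (subset_triangulatedClosure gens (Set.mem_iUnion.2 ⟨k, Z, hZ, ⟨Iso.refl _⟩⟩))

end HPD
end
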